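/- Let p > 1 be real. For real parameters (β, c) with c² < 1 and β < 2√(1−c²), define m(β,c) = inf { I(u;β,c) / K(u)^{2/(p+1)} }, the infimum taken over all twice continuously differentiable u : ℝ → ℝ with u, u', u'' square-integrable and K(u) > 0, where I(u;β,c) = ∫_ℝ (u''² − βu'² + (1−c²)u²) dx and K(u) = ∫_ℝ |u|^{p+1} dx. Then for every r with 0 < r ≤ (1−c²)^{−1/2}, the pair (rβ, √(1−r²(1−c²))) again satisfies the parameter constraints and m(rβ, √(1−r²(1−c²))) = r^{(3p+5)/(2(p+1))} · m(β,c). -/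

import Mathlib

open MeasureTheory

/-- The quadratic functional `I(u;β,c) = ∫ (u''² − βu'² + (1−c²)u²)`. -/
noncomputable def Ifun (β c : ℝ) (u : ℝ → ℝ) : ℝ :=
  ∫ x : ℝ, ((iteratedDeriv 2 u x) ^ 2 - β * (deriv u x) ^ 2 + (1 - c ^ 2) * (u x) ^ 2)

/-- The nonlinear functional `K(u) = ∫ |u|^{p+1}`. -/
noncomputable def Kfun (p : ℝ) (u : ℝ → ℝ) : ℝ :=
  ∫ x : ℝ, |u x| ^ (p + 1)

/-- Admissible functions: twice continuously differentiable with `u, u', u''`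
square-integrable. -/
def Adm (u : ℝ → ℝ) : Prop :=
  ContDiff ℝ 2 u ∧ Integrable (fun x => (u x) ^ 2) ∧
    Integrable (fun x => (deriv u x) ^ 2) ∧
    Integrable (fun x => (iteratedDeriv 2 u x) ^ 2)

/-- The ground-state variational constant
`m(β,c) = inf { I(u;β,c)/K(u)^{2/(p+1)} : u admissible, K(u) > 0 }`. -/
noncomputable def mconst (p β c : ℝ) : ℝ :=
  sInf {y : ℝ | ∃ u : ℝ → ℝ, Adm u ∧ 0 < Kfun p u ∧
    y = Ifun β c u / (Kfun p u) ^ (2 / (p + 1))}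

lemma deriv_scale {u : ℝ → ℝ} (hu : ContDiff ℝ 2 u) (k : ℝ) :
    deriv (fun x => u (k * x)) = fun x => k * deriv u (k * x) := by
  have h := iteratedDeriv_comp_const_mul (n := 1) (hu.of_le (by norm_num)) k
  simpa [iteratedDeriv_one] using h

lemma deriv2_scale {u : ℝ → ℝ} (hu : ContDiff ℝ 2 u) (k : ℝ) :
    iteratedDeriv 2 (fun x => u (k * x)) = fun x => k ^ 2 * iteratedDeriv 2 u (k * x) := by
  have h := iteratedDeriv_comp_const_mul (n := 2) (hu.of_le (by norm_num)) k
  simpa using h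

lemma Adm_scale {u : ℝ → ℝ} (hu : Adm u) {k : ℝ} (hk : k ≠ 0) :
    Adm (fun x => u (k * x)) := by
  obtain ⟨h0, h1, h2, h3⟩ := hu
  refine ⟨h0.comp (contDiff_const.mul contDiff_id), ?_, ?_, ?_⟩
  · exact h1.comp_mul_left' hk
  · rw [deriv_scale h0 k]
    simpa [mul_pow] using (h2.comp_mul_left' hk).const_mul (k ^ 2)
  · rw [deriv2_scale h0 k]
    simpa [mul_pow] using (h3.comp_mul_left' hk).const_mul ((k ^ 2) ^ 2)

lemma Kfun_scale (p : ℝ) {u : ℝ → ℝ} {k : ℝ} (hk : 0 < k) :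
    Kfun p (fun x => u (k * x)) = k⁻¹ * Kfun p u := by
  unfold Kfun
  rw [Measure.integral_comp_mul_left (fun y => |u y| ^ (p + 1)) k]
  rw [abs_of_pos (inv_pos.2 hk), smul_eq_mul]

lemma Ifun_scale {β c c' : ℝ} {u : ℝ → ℝ} (hu : ContDiff ℝ 2 u) {k : ℝ} (hk : 0 < k)
    (hc' : 1 - c' ^ 2 = k ^ 4 * (1 - c ^ 2)) :
    Ifun (k ^ 2 * β) c' (fun x => u (k * x)) = k ^ 3 * Ifun β c u := by
  unfold Ifun
  have heq : (fun x => (iteratedDeriv 2 (fun x => u (k * x)) x) ^ 2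
        - (k ^ 2 * β) * (deriv (fun x => u (k * x)) x) ^ 2
        + (1 - c' ^ 2) * ((fun x => u (k * x)) x) ^ 2)
      = fun x => k ^ 4 * ((iteratedDeriv 2 u (k * x)) ^ 2 - β * (deriv u (k * x)) ^ 2
        + (1 - c ^ 2) * (u (k * x)) ^ 2) := by
    funext x
    rw [deriv_scale hu k, deriv2_scale hu k, hc']
    ring
  rw [heq, integral_const_mul,
    Measure.integral_comp_mul_left
      (fun y => (iteratedDeriv 2 u y) ^ 2 - β * (deriv u y) ^ 2 + (1 - c ^ 2) * (u y) ^ 2) k,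
    abs_of_pos (inv_pos.2 hk), smul_eq_mul]
  field_simp

lemma ratio_scale {p β c β' c' : ℝ} (hp : 1 < p) {k : ℝ} (hk : 0 < k)
    (hβ' : β' = k ^ 2 * β) (hc' : 1 - c' ^ 2 = k ^ 4 * (1 - c ^ 2))
    {u : ℝ → ℝ} (hu : Adm u) (hK : 0 < Kfun p u) :
    Ifun β' c' (fun x => u (k * x)) / (Kfun p (fun x => u (k * x))) ^ (2 / (p + 1))
      = k ^ ((3 * p + 5) / (p + 1)) * (Ifun β c u / (Kfun p u) ^ (2 / (p + 1))) := by
  have hp1 : (0:ℝ) < p + 1 := by linarith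
  rw [hβ', Ifun_scale hu.1 hk hc', Kfun_scale p hk]
  rw [Real.mul_rpow (inv_nonneg.2 hk.le) hK.le, Real.inv_rpow hk.le]
  have he : (3 * p + 5) / (p + 1) = 3 + 2 / (p + 1) := by field_simp; ring
  have h3 : k ^ ((3:ℝ)) = k ^ (3:ℕ) := by
    rw [← Real.rpow_natCast k 3]; norm_num
  rw [he, Real.rpow_add hk, h3]
  have hkr : (0:ℝ) < k ^ (2 / (p + 1)) := Real.rpow_pos_of_pos hk _
  have hKr : (0:ℝ) < (Kfun p u) ^ (2 / (p + 1)) := Real.rpow_pos_of_pos hK _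
  field_simp

lemma mconst_scale {p β c β' c' : ℝ} (hp : 1 < p) {k : ℝ} (hk : 0 < k)
    (hβ' : β' = k ^ 2 * β) (hc' : 1 - c' ^ 2 = k ^ 4 * (1 - c ^ 2)) :
    mconst p β' c' = k ^ ((3 * p + 5) / (p + 1)) * mconst p β c := by
  have hE : (0:ℝ) ≤ k ^ ((3 * p + 5) / (p + 1)) := (Real.rpow_pos_of_pos hk _).le
  rw [mconst, mconst, ← smul_eq_mul, ← Real.sInf_smul_of_nonneg hE]
  congr 1
  ext y
  simp only [Set.mem_smul_set, Set.mem_setOf_eq, smul_eq_mul]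
  constructor
  · rintro ⟨v, hv, hKv, rfl⟩
    set u : ℝ → ℝ := fun x => v (k⁻¹ * x) with hudef
    have hveq : v = fun x => u (k * x) := by
      funext x; simp only [hudef]; rw [inv_mul_cancel_left₀ hk.ne']
    have hu : Adm u := Adm_scale hv (inv_ne_zero hk.ne')
    have hKu : 0 < Kfun p u := by
      rw [hudef, Kfun_scale p (inv_pos.2 hk)]
      exact mul_pos (by simpa using hk) hKv
    refine ⟨Ifun β c u / (Kfun p u) ^ (2 / (p + 1)), ⟨u, hu, hKu, rfl⟩, ?_⟩
    conv_rhs => rw [hveq]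
    exact (ratio_scale hp hk hβ' hc' hu hKu).symm
  · rintro ⟨y', ⟨u, hu, hKu, rfl⟩, rfl⟩
    refine ⟨fun x => u (k * x), Adm_scale hu hk.ne', ?_, ?_⟩
    · rw [Kfun_scale p hk]; exact mul_pos (inv_pos.2 hk) hKu
    · exact (ratio_scale hp hk hβ' hc' hu hKu).symm

/-- Scaling identity for the variational constant `m(β,c)`. -/
theorem mconst_scaling (p β c r : ℝ) (hp : 1 < p) (hc : c ^ 2 < 1)
    (hβ : β < 2 * Real.sqrt (1 - c ^ 2)) (hr0 : 0 < r)
    (hr1 : r ≤ (1 - c ^ 2) ^ (-(1 : ℝ) / 2)) :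
    ((Real.sqrt (1 - r ^ 2 * (1 - c ^ 2))) ^ 2 < 1 ∧
      r * β < 2 * Real.sqrt (1 - (Real.sqrt (1 - r ^ 2 * (1 - c ^ 2))) ^ 2)) ∧
    mconst p (r * β) (Real.sqrt (1 - r ^ 2 * (1 - c ^ 2)))
      = r ^ ((3 * p + 5) / (2 * (p + 1))) * mconst p β c := by
  have hc1 : (0:ℝ) < 1 - c ^ 2 := by linarith
  have hs : 0 < Real.sqrt (1 - c ^ 2) := Real.sqrt_pos.2 hc1
  have hrw : (1 - c ^ 2) ^ (-(1:ℝ) / 2) = (Real.sqrt (1 - c ^ 2))⁻¹ := by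
    rw [show (-(1:ℝ) / 2) = -(1/2) by ring, Real.rpow_neg hc1.le, ← Real.sqrt_eq_rpow]
  rw [hrw] at hr1
  have hrs : r * Real.sqrt (1 - c ^ 2) ≤ 1 := by
    have := mul_le_mul_of_nonneg_right hr1 hs.le
    rwa [inv_mul_cancel₀ hs.ne'] at this
  have hssq : Real.sqrt (1 - c ^ 2) ^ 2 = 1 - c ^ 2 := Real.sq_sqrt hc1.le
  have h1 : r ^ 2 * (1 - c ^ 2) ≤ 1 := by nlinarith [mul_pos hr0 hs]
  have h2 : 0 < r ^ 2 * (1 - c ^ 2) := by positivity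
  have hc'sq : (Real.sqrt (1 - r ^ 2 * (1 - c ^ 2))) ^ 2 = 1 - r ^ 2 * (1 - c ^ 2) :=
    Real.sq_sqrt (by linarith)
  have hsqrt : Real.sqrt (r ^ 2 * (1 - c ^ 2)) = r * Real.sqrt (1 - c ^ 2) := by
    rw [Real.sqrt_mul (sq_nonneg r), Real.sqrt_sq hr0.le]
  constructor
  · refine ⟨by rw [hc'sq]; linarith, ?_⟩
    have : 1 - (Real.sqrt (1 - r ^ 2 * (1 - c ^ 2))) ^ 2 = r ^ 2 * (1 - c ^ 2) := by
      rw [hc'sq]; ring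
    rw [this, hsqrt]
    nlinarith [mul_lt_mul_of_pos_left hβ hr0]
  · have hk : 0 < Real.sqrt r := Real.sqrt_pos.2 hr0
    have hk2 : Real.sqrt r ^ 2 = r := Real.sq_sqrt hr0.le
    have hm := mconst_scale (β := β) (c := c) (β' := r * β)
      (c' := Real.sqrt (1 - r ^ 2 * (1 - c ^ 2))) hp hk
      (by rw [hk2]) (by rw [hc'sq, show (Real.sqrt r) ^ 4 = (Real.sqrt r ^ 2) ^ 2 by ring, hk2]; ring)
    rw [hm]
    congr 1
    rw [Real.sqrt_eq_rpow, ← Real.rpow_mul hr0.le]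
    congr 1
    have hp1 : p + 1 ≠ 0 := by linarith
    field_simp
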